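/- arXiv:2401.10064 — 4 statements merged into one kernel-verified Lean document; each statement's English description precedes it below -/
import Mathlib

section
/- For a smooth positive function ρ on the one-dimensional torus and μ > 0 constant, the identity ∫_𝕋 μ (∂_x ρ / ρ) ∂_x( (∂_{xx}√ρ)/√ρ ) dx = -(μ/2) ∫_𝕋 (∂_{xx} log ρ)^2 dx holds. -/
/-- For smooth positive ρ on the 1D torus and μ > 0,
∫ μ (∂ₓρ/ρ) ∂ₓ((∂ₓₓ√ρ)/√ρ) dx = -(μ/2) ∫ (∂ₓₓ log ρ)² dx. -/
theorem stmt_2 (ρ : ℝ → ℝ) (μ : ℝ) (hμ : 0 < μ) (hρ : ContDiff ℝ (⊤ : ℕ∞) ρ)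
    (hpos : ∀ x, 0 < ρ x) (hper : ∀ x, ρ (x + 1) = ρ x) :
    ∫ x in (0:ℝ)..1,
        μ * (deriv ρ x / ρ x) *
          deriv (fun y => deriv (deriv (fun z => Real.sqrt (ρ z))) y / Real.sqrt (ρ y)) x
      = -(μ / 2) * ∫ x in (0:ℝ)..1, (deriv (deriv (fun z => Real.log (ρ z))) x) ^ 2 := by
  have hρd : Differentiable ℝ ρ := hρ.differentiable (by simp)
  have hne : ∀ x, ρ x ≠ 0 := fun x => (hpos x).ne'
  set u : ℝ → ℝ := fun x => Real.log (ρ x) with hu_def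
  have hu : ContDiff ℝ (((⊤:ℕ∞)):WithTop ℕ∞) u := (hρ.log hne).of_le (by simp)
  set u1 := deriv u with hu1_def
  set u2 := deriv u1 with hu2_def
  set u3 := deriv u2 with hu3_def
  have hu1 : ContDiff ℝ (((⊤:ℕ∞)):WithTop ℕ∞) u1 := (contDiff_infty_iff_deriv.mp hu).2
  have hu2 : ContDiff ℝ (((⊤:ℕ∞)):WithTop ℕ∞) u2 := (contDiff_infty_iff_deriv.mp hu1).2
  have hu3 : ContDiff ℝ (((⊤:ℕ∞)):WithTop ℕ∞) u3 := (contDiff_infty_iff_deriv.mp hu2).2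
  have hd1 : ∀ x, HasDerivAt u (u1 x) x := fun x => (hu.differentiable (by simp) x).hasDerivAt
  have hd2 : ∀ x, HasDerivAt u1 (u2 x) x := fun x => (hu1.differentiable (by simp) x).hasDerivAt
  have hd3 : ∀ x, HasDerivAt u2 (u3 x) x := fun x => (hu2.differentiable (by simp) x).hasDerivAt
  -- periodicity
  have hperu : Function.Periodic u 1 := fun x => by simp only [hu_def, hper x]
  have perderiv : ∀ f : ℝ → ℝ, Function.Periodic f 1 → Function.Periodic (deriv f) 1 := by
    intro f hf x
    have h := deriv_comp_add_const f 1 x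
    simp only [hf _] at h
    exact h.symm
  have hper1 : Function.Periodic u1 1 := perderiv u hperu
  have hper2 : Function.Periodic u2 1 := perderiv u1 hper1
  have hp1 : u1 1 = u1 0 := by simpa using hper1 0
  have hp2 : u2 1 = u2 0 := by simpa using hper2 0
  -- log derivative
  have h1 : ∀ x, u1 x = deriv ρ x / ρ x := fun x =>
    (((hρd x).hasDerivAt).log (hne x)).deriv
  -- sqrt as exp of u/2
  have hs : (fun z => Real.sqrt (ρ z)) = fun z => Real.exp (u z / 2) := by
    funext z
    rw [hu_def]
    rw [show Real.log (ρ z) / 2 = Real.log (ρ z) * (1/2 : ℝ) by ring,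
      ← Real.rpow_def_of_pos (hpos z), ← Real.sqrt_eq_rpow]
  have hds1 : deriv (fun z => Real.sqrt (ρ z)) = fun x => Real.exp (u x / 2) * (u1 x / 2) := by
    rw [hs]; funext x; exact (((hd1 x).div_const 2).exp).deriv
  have hds2 : deriv (deriv (fun z => Real.sqrt (ρ z)))
      = fun x => Real.exp (u x / 2) * (u1 x / 2) * (u1 x / 2)
          + Real.exp (u x / 2) * (u2 x / 2) := by
    rw [hds1]; funext x
    exact ((((hd1 x).div_const 2).exp).mul ((hd2 x).div_const 2)).deriv
  have hg : (fun y => deriv (deriv (fun z => Real.sqrt (ρ z))) y / Real.sqrt (ρ y))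
      = fun y => u2 y / 2 + u1 y ^ 2 / 4 := by
    funext y
    have hsy : Real.sqrt (ρ y) = Real.exp (u y / 2) := congrFun hs y
    simp only [hds2, hsy]
    have he : Real.exp (u y / 2) ≠ 0 := Real.exp_ne_zero _
    field_simp
    ring
  have hgd : ∀ x, deriv (fun y => deriv (deriv (fun z => Real.sqrt (ρ z))) y / Real.sqrt (ρ y)) x
      = u3 x / 2 + u1 x * u2 x / 2 := by
    intro x
    rw [hg]
    have h := (((hd3 x).div_const 2).add (((hd2 x).pow 2).div_const 4)).deriv
    rw [show (fun y => u2 y / 2 + u1 y ^ 2 / 4) = ((fun x => u2 x / 2) + fun x => (u1 ^ 2) x / 4) from rfl, h]; push_cast; ring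
  -- integrability
  have hI1 : IntervalIntegrable (fun x => u1 x * u3 x) MeasureTheory.volume 0 1 :=
    (hu1.continuous.mul hu3.continuous).intervalIntegrable _ _
  have hI2 : IntervalIntegrable (fun x => u1 x ^ 2 * u2 x) MeasureTheory.volume 0 1 :=
    (((hu1.continuous).pow 2).mul hu2.continuous).intervalIntegrable _ _
  have hI3 : IntervalIntegrable (fun x => u2 x * u2 x) MeasureTheory.volume 0 1 :=
    (hu2.continuous.mul hu2.continuous).intervalIntegrable _ _
  -- integration by parts
  have hA : ∫ x in (0:ℝ)..1, u1 x * u3 x = -∫ x in (0:ℝ)..1, u2 x * u2 x := by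
    have h := intervalIntegral.integral_mul_deriv_eq_deriv_mul
      (fun x _ => hd2 x) (fun x _ => hd3 x)
      (hu2.continuous.intervalIntegrable 0 1) (hu3.continuous.intervalIntegrable 0 1)
    rw [h, hp1, hp2, sub_self, zero_sub]
  -- vanishing cubic term
  have hB : ∫ x in (0:ℝ)..1, u1 x ^ 2 * u2 x = 0 := by
    have h : ∀ x ∈ Set.uIcc (0:ℝ) 1,
        HasDerivAt (fun y => u1 y ^ 3 / 3) (u1 x ^ 2 * u2 x) x := by
      intro x _
      have h' := ((hd2 x).pow 3).div_const 3
      refine h'.congr_deriv ?_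
      push_cast; ring
    rw [intervalIntegral.integral_eq_sub_of_hasDerivAt h hI2, hp1, sub_self]
  calc ∫ x in (0:ℝ)..1, μ * (deriv ρ x / ρ x) *
          deriv (fun y => deriv (deriv (fun z => Real.sqrt (ρ z))) y / Real.sqrt (ρ y)) x
      = ∫ x in (0:ℝ)..1, (μ/2 * (u1 x * u3 x) + μ/2 * (u1 x ^ 2 * u2 x)) := by
        apply intervalIntegral.integral_congr
        intro x _
        simp only [hgd, ← h1]
        ring
    _ = μ/2 * (∫ x in (0:ℝ)..1, u1 x * u3 x) + μ/2 * (∫ x in (0:ℝ)..1, u1 x ^ 2 * u2 x) := by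
        rw [intervalIntegral.integral_add (hI1.const_mul _) (hI2.const_mul _),
          intervalIntegral.integral_const_mul, intervalIntegral.integral_const_mul]
    _ = -(μ / 2) * ∫ x in (0:ℝ)..1, u2 x ^ 2 := by
        rw [hA, hB]
        have : ∫ x in (0:ℝ)..1, u2 x * u2 x = ∫ x in (0:ℝ)..1, u2 x ^ 2 := by
          apply intervalIntegral.integral_congr
          intro x _; simp only []; ring
        rw [this]; ring
end

section
/- For α ∈ (0, 3/2] and any smooth positive function ρ on the one-dimensional torus, the quantity (4(4-3α)/(3α^3)) ∫_𝕋 ρ^{-α} |∂_x(ρ^{α/2})|^4 dx + (4/α^2) ∫_𝕋 |∂_{xx}(ρ^{α/2})|^2 dx is bounded below by (16(3-2α)/(9α^3)) ∫_𝕋 ρ^{-α} |∂_x(ρ^{α/2})|^4 dx, and in particular is nonnegative. -/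
/-- For α ∈ (0,3/2] and smooth positive ρ on the 1D torus, the quantity
(4(4-3α)/(3α³)) ∫ ρ^{-α}|∂ₓ(ρ^{α/2})|⁴ + (4/α²) ∫ |∂ₓₓ(ρ^{α/2})|²
is bounded below by (16(3-2α)/(9α³)) ∫ ρ^{-α}|∂ₓ(ρ^{α/2})|⁴ and is nonnegative. -/
theorem stmt_5 (ρ : ℝ → ℝ) (α : ℝ) (hα : α ∈ Set.Ioc (0:ℝ) (3/2))
    (hρ : ContDiff ℝ (⊤ : ℕ∞) ρ) (hpos : ∀ x, 0 < ρ x) (hper : ∀ x, ρ (x + 1) = ρ x) :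
    (16 * (3 - 2 * α) / (9 * α ^ 3)) *
        (∫ x in (0:ℝ)..1, ρ x ^ (-α) * (deriv (fun y => ρ y ^ (α / 2)) x) ^ 4)
      ≤ (4 * (4 - 3 * α) / (3 * α ^ 3)) *
          (∫ x in (0:ℝ)..1, ρ x ^ (-α) * (deriv (fun y => ρ y ^ (α / 2)) x) ^ 4)
        + (4 / α ^ 2) *
          (∫ x in (0:ℝ)..1, (deriv (deriv (fun y => ρ y ^ (α / 2))) x) ^ 2)
    ∧ 0 ≤ (4 * (4 - 3 * α) / (3 * α ^ 3)) *
          (∫ x in (0:ℝ)..1, ρ x ^ (-α) * (deriv (fun y => ρ y ^ (α / 2)) x) ^ 4)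
        + (4 / α ^ 2) *
          (∫ x in (0:ℝ)..1, (deriv (deriv (fun y => ρ y ^ (α / 2))) x) ^ 2) := by
  obtain ⟨hα0, hα2⟩ := hα
  set f : ℝ → ℝ := fun y => ρ y ^ (α / 2) with hfdef
  have hfpos : ∀ x, 0 < f x := fun x => Real.rpow_pos_of_pos (hpos x) _
  have hfne : ∀ x, f x ≠ 0 := fun x => (hfpos x).ne'
  have hfsmooth : ContDiff ℝ (⊤ : ℕ∞) f := hρ.rpow_const_of_ne (fun x => (hpos x).ne')
  have hfsm : ContDiff ℝ ((⊤:ℕ∞):WithTop ℕ∞) f := hfsmooth.of_le (by simp)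
  have hFsmooth : ContDiff ℝ ((⊤:ℕ∞):WithTop ℕ∞) (deriv f) := (contDiff_infty_iff_deriv.mp hfsm).2
  have hGsmooth : ContDiff ℝ ((⊤:ℕ∞):WithTop ℕ∞) (deriv (deriv f)) := (contDiff_infty_iff_deriv.mp hFsmooth).2
  set F := deriv f with hF
  set G := deriv F with hG
  have hfc : Continuous f := hfsmooth.continuous
  have hFc : Continuous F := hFsmooth.continuous
  have hGc : Continuous G := hGsmooth.continuous
  have hfd : Differentiable ℝ f := hfsm.differentiable (by simp)
  have hFd : Differentiable ℝ F := hFsmooth.differentiable (by simp)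
  -- periodicity
  have hfper : ∀ x, f (x + 1) = f x := fun x => by simp only [hfdef, hper]
  have hFper : ∀ x, F (x + 1) = F x := by
    intro x
    have h := deriv_comp_add_const f 1 x
    rw [show (fun y => f (y + 1)) = f from funext hfper] at h
    exact h.symm
  set I := ∫ x in (0:ℝ)..1, ρ x ^ (-α) * (F x) ^ 4 with hI
  set J := ∫ x in (0:ℝ)..1, (G x) ^ 2 with hJ
  -- rewrite I
  have hsq : ∀ x, (f x) ^ 2 = ρ x ^ α := by
    intro x
    rw [sq, hfdef, ← Real.rpow_add (hpos x)]
    norm_num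
  have hIeq : I = ∫ x in (0:ℝ)..1, (F x) ^ 4 / (f x) ^ 2 := by
    apply intervalIntegral.integral_congr
    intro x _
    show ρ x ^ (-α) * F x ^ 4 = F x ^ 4 / f x ^ 2
    rw [hsq, Real.rpow_neg (hpos x).le, div_eq_mul_inv, mul_comm]
  have c1 : Continuous fun x => (F x) ^ 4 / (f x) ^ 2 :=
    (hFc.pow 4).div (hfc.pow 2) (fun x => pow_ne_zero _ (hfne x))
  have c2 : Continuous fun x => 3 * (F x) ^ 2 * G x / f x :=
    ((continuous_const.mul (hFc.pow 2)).mul hGc).div hfc hfne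
  -- integration by parts
  have hibp : (∫ x in (0:ℝ)..1, (3 * (F x) ^ 2 * G x / f x - (F x) ^ 4 / (f x) ^ 2)) = 0 := by
    have hderiv : ∀ x ∈ Set.uIcc (0:ℝ) 1, HasDerivAt (fun y => (F y) ^ 3 / f y)
        (3 * (F x) ^ 2 * G x / f x - (F x) ^ 4 / (f x) ^ 2) x := by
      intro x _
      have h1 : HasDerivAt (fun y => (F y) ^ 3) (3 * (F x) ^ 2 * G x) x := by
        have := ((hFd x).hasDerivAt.pow 3)
        exact this.congr_deriv (by rw [hG]; ring)
      have h2 : HasDerivAt f (F x) x := (hfd x).hasDerivAt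
      have h3 : HasDerivAt (fun y => (F y) ^ 3 / f y) _ x := h1.div h2 (hfne x)
      convert h3 using 1
      rw [div_sub_div _ _ (hfne x) (pow_ne_zero 2 (hfne x)), div_eq_div_iff (mul_ne_zero (hfne x) (pow_ne_zero 2 (hfne x))) (pow_ne_zero 2 (hfne x))]
      ring
    rw [intervalIntegral.integral_eq_sub_of_hasDerivAt hderiv
      ((c2.sub c1).intervalIntegrable 0 1)]
    have e1 : F 1 = F 0 := by have := hFper 0; norm_num at this; exact this
    have e2 : f 1 = f 0 := by have := hfper 0; norm_num at this; exact this
    rw [e1, e2, sub_self]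
  have hkey : (∫ x in (0:ℝ)..1, (F x) ^ 4 / (f x) ^ 2)
      = ∫ x in (0:ℝ)..1, 3 * (F x) ^ 2 * G x / f x := by
    have h : (∫ x in (0:ℝ)..1, (3 * (F x) ^ 2 * G x / f x - (F x) ^ 4 / (f x) ^ 2))
        = (∫ x in (0:ℝ)..1, 3 * (F x) ^ 2 * G x / f x)
          - ∫ x in (0:ℝ)..1, (F x) ^ 4 / (f x) ^ 2 :=
      intervalIntegral.integral_sub (c2.intervalIntegrable 0 1)
        (c1.intervalIntegrable 0 1)
    rw [hibp] at h
    linarith [h]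
  -- pointwise bound and integral mono
  have hmono : (∫ x in (0:ℝ)..1, 3 * (F x) ^ 2 * G x / f x)
      ≤ ∫ x in (0:ℝ)..1, ((1/2) * ((F x) ^ 4 / (f x) ^ 2) + (9/2) * (G x) ^ 2) := by
    apply intervalIntegral.integral_mono_on (by norm_num)
      (c2.intervalIntegrable 0 1)
      (((continuous_const.mul c1).add (continuous_const.mul (hGc.pow 2))).intervalIntegrable 0 1)
    intro x _
    show 3 * F x ^ 2 * G x / f x ≤ (1/2) * ((F x) ^ 4 / (f x) ^ 2) + (9/2) * (G x) ^ 2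
    have hu : (F x) ^ 4 / (f x) ^ 2 = ((F x) ^ 2 / f x) ^ 2 := by
      rw [div_pow]; ring_nf
    have hv : 3 * (F x) ^ 2 * G x / f x = 3 * G x * ((F x) ^ 2 / f x) := by ring
    rw [hu, hv]
    nlinarith [sq_nonneg ((F x) ^ 2 / f x - 3 * G x)]
  have hsum : (∫ x in (0:ℝ)..1, ((1/2) * ((F x) ^ 4 / (f x) ^ 2) + (9/2) * (G x) ^ 2))
      = (1/2) * (∫ x in (0:ℝ)..1, (F x) ^ 4 / (f x) ^ 2) + (9/2) * J := by
    rw [intervalIntegral.integral_add (f := fun x => (1/2) * ((F x) ^ 4 / (f x) ^ 2)) (g := fun x => (9/2) * (G x) ^ 2) ((continuous_const.mul c1).intervalIntegrable 0 1)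
      ((continuous_const.mul (hGc.pow 2)).intervalIntegrable 0 1),
      intervalIntegral.integral_const_mul, intervalIntegral.integral_const_mul]
  have hI9J : I ≤ 9 * J := by
    rw [hIeq]
    have := hmono
    rw [hsum, ← hkey] at this
    linarith
  have hInn : 0 ≤ I := by
    rw [hIeq]
    apply intervalIntegral.integral_nonneg (by norm_num)
    intro x _
    positivity
  have hJnn : 0 ≤ J := by
    apply intervalIntegral.integral_nonneg (by norm_num)
    intro x _
    positivity
  have hid : 4 * (4 - 3 * α) / (3 * α ^ 3) * I + 4 / α ^ 2 * J
      - 16 * (3 - 2 * α) / (9 * α ^ 3) * I = 4 / (9 * α ^ 2) * (9 * J - I) := by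
    field_simp
    ring
  have hmain : 16 * (3 - 2 * α) / (9 * α ^ 3) * I
      ≤ 4 * (4 - 3 * α) / (3 * α ^ 3) * I + 4 / α ^ 2 * J := by
    have h1 : 0 ≤ 4 / (9 * α ^ 2) * (9 * J - I) :=
      mul_nonneg (by positivity) (by linarith)
    linarith [hid]
  refine ⟨hmain, ?_⟩
  have h2 : 0 ≤ 16 * (3 - 2 * α) / (9 * α ^ 3) * I :=
    mul_nonneg (div_nonneg (by linarith) (by positivity)) hInn
  linarith
end

section
/- For smooth functions ρ > 0 and u on the one-dimensional torus satisfying the continuity equation ∂_t ρ + ∂_x(ρ u) = 0, the identity ∫_𝕋 ρ u ∂_x( (∂_{xx}√ρ)/√ρ ) dx = - d/dt ∫_𝕋 |∂_x √ρ|^2 dx holds. -/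
open Function MeasureTheory intervalIntegral Metric Set

lemma per_deriv {f : ℝ → ℝ} (hf : ∀ x, f (x + 1) = f x) (x : ℝ) :
    deriv f (x + 1) = deriv f x := by
  have h : (fun y => f (y + 1)) = f := funext hf
  calc deriv f (x + 1) = deriv (fun y => f (y + 1)) x := (deriv_comp_add_const f 1 x).symm
  _ = deriv f x := by rw [h]

lemma hasDerivAt_slice_snd {V : ℝ × ℝ → ℝ} (hV : ContDiff ℝ (⊤ : ℕ∞) V) (s x : ℝ) :
    HasDerivAt (fun z => V (s, z)) (fderiv ℝ V (s, x) (0, 1)) x := by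
  have h1 : HasFDerivAt V (fderiv ℝ V (s, x)) (s, x) :=
    (hV.differentiable (by simp) (s, x)).hasFDerivAt
  have h2 : HasDerivAt (fun z : ℝ => ((s : ℝ), z)) ((0 : ℝ), (1 : ℝ)) x := by
    simpa using (hasDerivAt_const x s).prodMk (hasDerivAt_id x)
  exact h1.comp_hasDerivAt x h2

lemma hasDerivAt_slice_fst {V : ℝ × ℝ → ℝ} (hV : ContDiff ℝ (⊤ : ℕ∞) V) (s x : ℝ) :
    HasDerivAt (fun τ => V (τ, x)) (fderiv ℝ V (s, x) (1, 0)) s := by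
  have h1 : HasFDerivAt V (fderiv ℝ V (s, x)) (s, x) :=
    (hV.differentiable (by simp) (s, x)).hasFDerivAt
  have h2 : HasDerivAt (fun τ : ℝ => (τ, (x : ℝ))) ((1 : ℝ), (0 : ℝ)) s := by
    simpa using (hasDerivAt_id s).prodMk (hasDerivAt_const s x)
  exact h1.comp_hasDerivAt s h2

lemma contDiff_fderiv_apply {V : ℝ × ℝ → ℝ} (hV : ContDiff ℝ (⊤ : ℕ∞) V) (w : ℝ × ℝ) :
    ContDiff ℝ (⊤ : ℕ∞) (fun p => fderiv ℝ V p w) :=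
  (hV.fderiv_right (by simp)).clm_apply contDiff_const

lemma hasDerivAt_integral_param {F : ℝ × ℝ → ℝ} (hF : ContDiff ℝ (⊤ : ℕ∞) F) (t : ℝ) :
    HasDerivAt (fun s => ∫ x in (0:ℝ)..1, F (s, x))
      (∫ x in (0:ℝ)..1, fderiv ℝ F (t, x) (1, 0)) t := by
  set F' : ℝ × ℝ → ℝ := fun p => fderiv ℝ F p (1, 0) with hF'def
  have hF' : ContDiff ℝ (⊤ : ℕ∞) F' := contDiff_fderiv_apply hF _
  have hK : IsCompact ((closedBall t 1) ×ˢ (uIcc (0:ℝ) 1)) :=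
    (isCompact_closedBall t 1).prod isCompact_uIcc
  obtain ⟨C, hC⟩ := hK.exists_bound_of_continuousOn (hF'.continuous.continuousOn)
  have key := intervalIntegral.hasDerivAt_integral_of_dominated_loc_of_deriv_le
    (𝕜 := ℝ) (μ := volume) (a := (0:ℝ)) (b := 1) (s := ball t 1) (bound := fun _ => C)
    (F := fun s x => F (s, x)) (F' := fun s x => F' (s, x)) (x₀ := t)
    (ball_mem_nhds t one_pos)
    (Filter.Eventually.of_forall fun s =>
      (hF.continuous.comp (continuous_const.prodMk continuous_id)).aestronglyMeasurable)
    ((hF.continuous.comp (continuous_const.prodMk continuous_id)).intervalIntegrable _ _)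
    ((hF'.continuous.comp (continuous_const.prodMk continuous_id)).aestronglyMeasurable)
    (Filter.Eventually.of_forall fun y hy s hs => by
      exact hC (s, y) ⟨ball_subset_closedBall hs, uIoc_subset_uIcc hy⟩)
    (intervalIntegrable_const)
    (Filter.Eventually.of_forall fun y hy s hs => hasDerivAt_slice_fst hF s y)
  exact key.2

lemma mixed_partial {V : ℝ × ℝ → ℝ} (hV : ContDiff ℝ (⊤ : ℕ∞) V) (p : ℝ × ℝ) (v w : ℝ × ℝ) :
    fderiv ℝ (fun q => fderiv ℝ V q w) p v = fderiv ℝ (fun q => fderiv ℝ V q v) p w := by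
  have hG : ContDiff ℝ (⊤ : ℕ∞) (fderiv ℝ V) := hV.fderiv_right (by simp)
  have hGd : DifferentiableAt ℝ (fderiv ℝ V) p := hG.differentiable (by simp) p
  have h1 : ∀ ξ : ℝ × ℝ, fderiv ℝ (fun q => fderiv ℝ V q ξ) p
      = (fderiv ℝ (fderiv ℝ V) p).flip ξ := by
    intro ξ
    rw [fderiv_clm_apply hGd (differentiableAt_const ξ)]
    simp
  have hsym := second_derivative_symmetric (f := V) (f' := fderiv ℝ V)
    (f'' := fderiv ℝ (fderiv ℝ V) p)
    (fun y => (hV.differentiable (by simp) y).hasFDerivAt) hGd.hasFDerivAt v w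
  rw [h1 w, h1 v]
  simpa using hsym

/-- For smooth ρ > 0 and u on the 1D torus with ∂ₜρ + ∂ₓ(ρu) = 0,
∫ ρ u ∂ₓ((∂ₓₓ√ρ)/√ρ) dx = - d/dt ∫ |∂ₓ√ρ|² dx. -/
theorem stmt_9 (ρ u : ℝ → ℝ → ℝ)
    (hρ : ContDiff ℝ (⊤ : ℕ∞) (Function.uncurry ρ)) (hu : ContDiff ℝ (⊤ : ℕ∞) (Function.uncurry u))
    (hpos : ∀ t x, 0 < ρ t x)
    (hper : ∀ t x, ρ t (x + 1) = ρ t x ∧ u t (x + 1) = u t x)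
    (hcont : ∀ t x, deriv (fun s => ρ s x) t + deriv (fun y => ρ t y * u t y) x = 0) :
    ∀ t, ∫ x in (0:ℝ)..1,
        ρ t x * u t x *
          deriv (fun y => deriv (deriv (fun z => Real.sqrt (ρ t z))) y / Real.sqrt (ρ t y)) x
      = - deriv (fun s => ∫ x in (0:ℝ)..1, (deriv (fun z => Real.sqrt (ρ s z)) x) ^ 2) t := by
  intro t
  have h01 : (0:ℝ) + 1 = 1 := by norm_num
  set V : ℝ × ℝ → ℝ := fun p => Real.sqrt (ρ p.1 p.2) with hVdef
  have hV : ContDiff ℝ (⊤ : ℕ∞) V := by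
    rw [contDiff_iff_contDiffAt]
    intro p
    exact (Real.contDiffAt_sqrt (ne_of_gt (hpos p.1 p.2))).comp p hρ.contDiffAt
  set Vx : ℝ × ℝ → ℝ := fun p => fderiv ℝ V p (0, 1) with hVxdef
  have hVx : ContDiff ℝ (⊤ : ℕ∞) Vx := contDiff_fderiv_apply hV _
  set Vxx : ℝ × ℝ → ℝ := fun p => fderiv ℝ Vx p (0, 1) with hVxxdef
  have hVxx : ContDiff ℝ (⊤ : ℕ∞) Vxx := contDiff_fderiv_apply hVx _
  set Vt : ℝ × ℝ → ℝ := fun p => fderiv ℝ V p (1, 0) with hVtdef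
  have hVt : ContDiff ℝ (⊤ : ℕ∞) Vt := contDiff_fderiv_apply hV _
  set Vxt : ℝ × ℝ → ℝ := fun p => fderiv ℝ Vt p (0, 1) with hVxtdef
  have hVxt : ContDiff ℝ (⊤ : ℕ∞) Vxt := contDiff_fderiv_apply hVt _
  -- slice derivative identifications
  have hax : ∀ s : ℝ, deriv (fun z => Real.sqrt (ρ s z)) = fun x => Vx (s, x) := by
    intro s; funext x
    exact (hasDerivAt_slice_snd hV s x).deriv
  have haxx : ∀ (s y : ℝ), deriv (deriv (fun z => Real.sqrt (ρ s z))) y = Vxx (s, y) := by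
    intro s y; rw [hax s]
    exact (hasDerivAt_slice_snd hVx s y).deriv
  -- periodicity facts
  have hρper : ∀ s x : ℝ, ρ s (x + 1) = ρ s x := fun s x => (hper s x).1
  have hsqper : ∀ s x : ℝ, Real.sqrt (ρ s (x + 1)) = Real.sqrt (ρ s x) := by
    intro s x; rw [hρper]
  have hVxper : ∀ s x : ℝ, Vx (s, x + 1) = Vx (s, x) := by
    intro s x
    rw [← congrFun (hax s) (x + 1), ← congrFun (hax s) x]
    exact per_deriv (hsqper s) x
  have hderivper : ∀ s y : ℝ, deriv (fun z => Real.sqrt (ρ s z)) (y + 1)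
      = deriv (fun z => Real.sqrt (ρ s z)) y := fun s y => per_deriv (hsqper s) y
  have hVxxper : ∀ s x : ℝ, Vxx (s, x + 1) = Vxx (s, x) := by
    intro s x
    rw [← haxx s (x + 1), ← haxx s x]
    exact per_deriv (hderivper s) x
  have hVtper : ∀ s x : ℝ, Vt (s, x + 1) = Vt (s, x) := by
    intro s x
    have e : (fun τ => V (τ, x + 1)) = fun τ => V (τ, x) := by
      funext τ; show Real.sqrt (ρ τ (x+1)) = Real.sqrt (ρ τ x); rw [hρper]
    calc Vt (s, x + 1) = deriv (fun τ => V (τ, x + 1)) s :=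
          ((hasDerivAt_slice_fst hV s (x+1)).deriv).symm
    _ = deriv (fun τ => V (τ, x)) s := by rw [e]
    _ = Vt (s, x) := (hasDerivAt_slice_fst hV s x).deriv
  -- basic values
  have hVperx : ∀ x : ℝ, V (t, x + 1) = V (t, x) := by
    intro x; show Real.sqrt (ρ t (x + 1)) = Real.sqrt (ρ t x); rw [hρper]
  have hVpos : ∀ x : ℝ, 0 < V (t, x) := fun x => Real.sqrt_pos.mpr (hpos t x)
  set P : ℝ → ℝ := fun y => ρ t y * u t y with hPdef
  have hP : ContDiff ℝ (⊤ : ℕ∞) P := by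
    have h1 : ContDiff ℝ (⊤ : ℕ∞) (fun y : ℝ => ρ t y) := hρ.comp (contDiff_const.prodMk contDiff_id)
    have h2 : ContDiff ℝ (⊤ : ℕ∞) (fun y : ℝ => u t y) := hu.comp (contDiff_const.prodMk contDiff_id)
    exact h1.mul h2
  -- continuity equation ⇒ formula for Vt
  have hVt_eq : ∀ x : ℝ, Vt (t, x) = -(deriv P x) / (2 * Real.sqrt (ρ t x)) := by
    intro x
    have h1 : HasDerivAt (fun τ => ρ τ x) (fderiv ℝ (uncurry ρ) (t, x) (1, 0)) t :=
      hasDerivAt_slice_fst hρ t x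
    have h2 : HasDerivAt (fun τ => Real.sqrt (ρ τ x))
        (1 / (2 * Real.sqrt (ρ t x)) * fderiv ℝ (uncurry ρ) (t, x) (1, 0)) t :=
      (Real.hasDerivAt_sqrt (ne_of_gt (hpos t x))).comp t h1
    have h3 : HasDerivAt (fun τ => V (τ, x)) (Vt (t, x)) t := hasDerivAt_slice_fst hV t x
    have h4 : Vt (t, x) = 1 / (2 * Real.sqrt (ρ t x)) * fderiv ℝ (uncurry ρ) (t, x) (1, 0) :=
      h3.unique h2
    have h5 : fderiv ℝ (uncurry ρ) (t, x) (1, 0) = deriv (fun s => ρ s x) t :=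
      ((hasDerivAt_slice_fst hρ t x).deriv).symm
    have h6 : deriv (fun s => ρ s x) t = -(deriv P x) := by
      rw [hPdef]; linarith [hcont t x]
    rw [h4, h5, h6]; ring
  -- Clairaut
  have hmix : ∀ x : ℝ, fderiv ℝ Vx (t, x) (1, 0) = Vxt (t, x) := fun x =>
    mixed_partial hV (t, x) (1, 0) (0, 1)
  -- derivative of the time-dependent integral
  set F : ℝ × ℝ → ℝ := fun p => (Vx p) ^ 2 with hFdef
  have hF : ContDiff ℝ (⊤ : ℕ∞) F := hVx.pow 2
  have hFt : ∀ x : ℝ, fderiv ℝ F (t, x) (1, 0) = 2 * Vx (t, x) * Vxt (t, x) := by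
    intro x
    have h1 : HasDerivAt (fun s => F (s, x)) (fderiv ℝ F (t, x) (1, 0)) t :=
      hasDerivAt_slice_fst hF t x
    have h2 : HasDerivAt (fun s => Vx (s, x)) (fderiv ℝ Vx (t, x) (1, 0)) t :=
      hasDerivAt_slice_fst hVx t x
    have h3 := h2.pow 2
    have h4 := h1.unique h3
    rw [h4, hmix x]
    push_cast
    ring
  have hDeriv : deriv (fun s => ∫ x in (0:ℝ)..1, (deriv (fun z => Real.sqrt (ρ s z)) x) ^ 2) t
      = ∫ x in (0:ℝ)..1, 2 * Vx (t, x) * Vxt (t, x) := by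
    have hFun : (fun s => ∫ x in (0:ℝ)..1, (deriv (fun z => Real.sqrt (ρ s z)) x) ^ 2)
        = fun s => ∫ x in (0:ℝ)..1, F (s, x) := by
      funext s
      refine intervalIntegral.integral_congr fun x _ => ?_
      rw [congrFun (hax s) x]
    rw [hFun, (hasDerivAt_integral_param hF t).deriv]
    exact intervalIntegral.integral_congr fun x _ => hFt x
  -- continuity of slices
  have hmk : Continuous (fun y : ℝ => ((t : ℝ), y)) := continuous_const.prodMk continuous_id
  have cVx : Continuous (fun x => Vx (t, x)) := hVx.continuous.comp hmk
  have cVxx : Continuous (fun x => Vxx (t, x)) := hVxx.continuous.comp hmk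
  have cVt : Continuous (fun x => Vt (t, x)) := hVt.continuous.comp hmk
  have cVxt : Continuous (fun x => Vxt (t, x)) := hVxt.continuous.comp hmk
  -- first integration by parts
  have hIBP1 : ∫ x in (0:ℝ)..1, (Vxt (t, x) * Vx (t, x) + Vt (t, x) * Vxx (t, x)) = 0 := by
    have h := intervalIntegral.integral_deriv_mul_eq_sub
      (a := (0:ℝ)) (b := (1:ℝ))
      (u := fun x => Vt (t, x)) (v := fun x => Vx (t, x))
      (u' := fun x => Vxt (t, x)) (v' := fun x => Vxx (t, x))
      (fun x _ => hasDerivAt_slice_snd hVt t x)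
      (fun x _ => hasDerivAt_slice_snd hVx t x)
      (cVxt.intervalIntegrable 0 1) (cVxx.intervalIntegrable 0 1)
    have hval : Vt (t, (1:ℝ)) * Vx (t, 1) - Vt (t, 0) * Vx (t, 0) = 0 := by
      rw [← h01, hVtper, hVxper]; ring
    exact h.trans hval
  -- g and its properties
  set g : ℝ → ℝ := fun y => Vxx (t, y) / V (t, y) with hgdef
  have hg : ContDiff ℝ (⊤ : ℕ∞) g :=
    (hVxx.comp (contDiff_const.prodMk contDiff_id)).div
      (hV.comp (contDiff_const.prodMk contDiff_id)) (fun y => ne_of_gt (hVpos y))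
  have hgper : g 1 = g 0 := by
    show Vxx (t, 1) / V (t, 1) = Vxx (t, 0) / V (t, 0)
    rw [← h01, hVxxper, hVperx]
  have hPper : P 1 = P 0 := by
    show ρ t 1 * u t 1 = ρ t 0 * u t 0
    rw [← h01, (hper t 0).1, (hper t 0).2]
  -- rewrite LHS integrand
  have hLHS : ∫ x in (0:ℝ)..1,
      ρ t x * u t x *
        deriv (fun y => deriv (deriv (fun z => Real.sqrt (ρ t z))) y / Real.sqrt (ρ t y)) x
      = ∫ x in (0:ℝ)..1, P x * deriv g x := by
    refine intervalIntegral.integral_congr fun x _ => ?_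
    have e : (fun y => deriv (deriv (fun z => Real.sqrt (ρ t z))) y / Real.sqrt (ρ t y)) = g := by
      funext y; rw [haxx t y]
    rw [e]
  -- second integration by parts
  have hIBP2 : ∫ x in (0:ℝ)..1, P x * deriv g x
      = P 1 * g 1 - P 0 * g 0 - ∫ x in (0:ℝ)..1, deriv P x * g x :=
    intervalIntegral.integral_mul_deriv_eq_deriv_mul
      (fun x _ => (hP.differentiable (by simp) x).hasDerivAt)
      (fun x _ => (hg.differentiable (by simp) x).hasDerivAt)
      ((hP.continuous_deriv (by simp)).intervalIntegrable _ _)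
      ((hg.continuous_deriv (by simp)).intervalIntegrable _ _)
  -- pointwise identity linking the two integrands
  have hptw : ∀ x : ℝ, deriv P x * g x = -(2 * Vt (t, x) * Vxx (t, x)) := by
    intro x
    have hs : Real.sqrt (ρ t x) ≠ 0 := ne_of_gt (Real.sqrt_pos.mpr (hpos t x))
    have hgx : g x = Vxx (t, x) / Real.sqrt (ρ t x) := rfl
    rw [hgx, hVt_eq x]
    field_simp
  have hkey : ∫ x in (0:ℝ)..1, 2 * Vx (t, x) * Vxt (t, x)
      = ∫ x in (0:ℝ)..1, deriv P x * g x := by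
    have hi1 : IntervalIntegrable (fun x => 2 * Vx (t, x) * Vxt (t, x)) volume 0 1 :=
      ((continuous_const.mul cVx).mul cVxt).intervalIntegrable _ _
    have hi2 : IntervalIntegrable (fun x => deriv P x * g x) volume 0 1 :=
      ((hP.continuous_deriv (by simp)).mul hg.continuous).intervalIntegrable _ _
    have h0 : (∫ x in (0:ℝ)..1, 2 * Vx (t, x) * Vxt (t, x))
        - ∫ x in (0:ℝ)..1, deriv P x * g x = 0 := by
      rw [← intervalIntegral.integral_sub hi1 hi2]
      have e : ∀ x : ℝ, 2 * Vx (t, x) * Vxt (t, x) - deriv P x * g x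
          = 2 * (Vxt (t, x) * Vx (t, x) + Vt (t, x) * Vxx (t, x)) := by
        intro x; linear_combination (-1 : ℝ) * hptw x
      rw [intervalIntegral.integral_congr fun x _ => e x]
      rw [intervalIntegral.integral_const_mul, hIBP1, mul_zero]
    linarith
  rw [hLHS, hIBP2, hPper, hgper, hDeriv, hkey]
  ring
end

section
/- Let ρ > 0 and u solve (deterministically and smoothly) the continuity and momentum equations of the Quantum–Navier–Stokes system with μ(ρ) = ρ^α, and define the effective velocity V = u + ρ^{α-2} ∂_x ρ. Then Q = ρ^{α-2} ∂_x ρ satisfies the transport equation ∂_t Q + u ∂_x Q = -ρ^{-1} ∂_x(ρ^α ∂_x u), and consequently (ρ, ρV) solves ∂_t ρ + ∂_x(ρu) = 0 and ∂_t(ρV) + ∂_x(ρ u V) + ∂_x ρ^γ = ρ ∂_x((∂_{xx}√ρ)/√ρ). -/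
open Function

section API
variable {f : ℝ → ℝ → ℝ}

private lemma hline_t (t x : ℝ) : HasDerivAt (fun s : ℝ => (s, x)) ((1:ℝ), (0:ℝ)) t :=
  (hasDerivAt_id t).prodMk (hasDerivAt_const t x)

private lemma hline_x (t x : ℝ) : HasDerivAt (fun y : ℝ => (t, y)) ((0:ℝ), (1:ℝ)) x :=
  (hasDerivAt_const x t).prodMk (hasDerivAt_id x)

lemma hdA_fst' (hf : ContDiff ℝ (⊤ : ℕ∞) (uncurry f)) (t x : ℝ) :
    HasDerivAt (fun s => f s x) (fderiv ℝ (uncurry f) (t, x) (1, 0)) t :=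
  ((hf.differentiable (by simp) (t, x)).hasFDerivAt).comp_hasDerivAt_of_eq t (hline_t t x) rfl

lemma hdA_snd' (hf : ContDiff ℝ (⊤ : ℕ∞) (uncurry f)) (t x : ℝ) :
    HasDerivAt (fun y => f t y) (fderiv ℝ (uncurry f) (t, x) (0, 1)) x :=
  ((hf.differentiable (by simp) (t, x)).hasFDerivAt).comp_hasDerivAt_of_eq x (hline_x t x) rfl

lemma hdA_fst (hf : ContDiff ℝ (⊤ : ℕ∞) (uncurry f)) (t x : ℝ) :
    HasDerivAt (fun s => f s x) (deriv (fun s => f s x) t) t :=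
  (hdA_fst' hf t x).differentiableAt.hasDerivAt

lemma hdA_snd (hf : ContDiff ℝ (⊤ : ℕ∞) (uncurry f)) (t x : ℝ) :
    HasDerivAt (fun y => f t y) (deriv (fun y => f t y) x) x :=
  (hdA_snd' hf t x).differentiableAt.hasDerivAt

lemma contDiff_dFst (hf : ContDiff ℝ (⊤ : ℕ∞) (uncurry f)) :
    ContDiff ℝ (⊤ : ℕ∞) (uncurry fun t x => deriv (fun s => f s x) t) := by
  have heq : (uncurry fun t x => deriv (fun s => f s x) t)
      = fun p : ℝ × ℝ => fderiv ℝ (uncurry f) p (1, 0) :=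
    funext fun p => (hdA_fst' hf p.1 p.2).deriv
  rw [heq]
  exact (ContinuousLinearMap.apply ℝ ℝ ((1:ℝ), (0:ℝ))).contDiff.comp
    (hf.fderiv_right (by simp))

lemma contDiff_dSnd (hf : ContDiff ℝ (⊤ : ℕ∞) (uncurry f)) :
    ContDiff ℝ (⊤ : ℕ∞) (uncurry fun t x => deriv (fun y => f t y) x) := by
  have heq : (uncurry fun t x => deriv (fun y => f t y) x)
      = fun p : ℝ × ℝ => fderiv ℝ (uncurry f) p (0, 1) :=
    funext fun p => (hdA_snd' hf p.1 p.2).deriv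
  rw [heq]
  exact (ContinuousLinearMap.apply ℝ ℝ ((0:ℝ), (1:ℝ))).contDiff.comp
    (hf.fderiv_right (by simp))

lemma deriv_swap (hf : ContDiff ℝ (⊤ : ℕ∞) (uncurry f)) (t x : ℝ) :
    deriv (fun s => deriv (fun y => f s y) x) t
      = deriv (fun y => deriv (fun s => f s y) t) x := by
  have hF1 : ∀ p : ℝ × ℝ, HasFDerivAt (uncurry f) (fderiv ℝ (uncurry f) p) p :=
    fun p => (hf.differentiable (by simp) p).hasFDerivAt
  have hF2 : HasFDerivAt (fderiv ℝ (uncurry f))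
      (fderiv ℝ (fderiv ℝ (uncurry f)) (t, x)) (t, x) :=
    (((hf.fderiv_right (m := 1) (WithTop.coe_le_coe.mpr le_top)).differentiable one_ne_zero) (t, x)).hasFDerivAt
  have hsymm := second_derivative_symmetric hF1 hF2 (1, 0) (0, 1)
  have e1 : (fun s => deriv (fun y => f s y) x)
      = fun s => fderiv ℝ (uncurry f) (s, x) (0, 1) :=
    funext fun s => (hdA_snd' hf s x).deriv
  have e2 : (fun y => deriv (fun s => f s y) t)
      = fun y => fderiv ℝ (uncurry f) (t, y) (1, 0) :=
    funext fun y => (hdA_fst' hf t y).deriv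
  have h1 : HasDerivAt (fun s => fderiv ℝ (uncurry f) (s, x) (0, 1))
      (fderiv ℝ (fderiv ℝ (uncurry f)) (t, x) (1, 0) (0, 1)) t := by
    have hc := hF2.comp_hasDerivAt_of_eq t (hline_t t x) rfl
    exact (ContinuousLinearMap.apply ℝ ℝ ((0:ℝ), (1:ℝ))).hasFDerivAt.comp_hasDerivAt_of_eq t hc rfl
  have h2 : HasDerivAt (fun y => fderiv ℝ (uncurry f) (t, y) (1, 0))
      (fderiv ℝ (fderiv ℝ (uncurry f)) (t, x) (0, 1) (1, 0)) x := by
    have hc := hF2.comp_hasDerivAt_of_eq x (hline_x t x) rfl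
    exact (ContinuousLinearMap.apply ℝ ℝ ((1:ℝ), (0:ℝ))).hasFDerivAt.comp_hasDerivAt_of_eq x hc rfl
  rw [e1, e2, h1.deriv, h2.deriv, hsymm]

end API

/-- Effective velocity formulation: with Q = ρ^{α-2}∂ₓρ and V = u + Q,
Q satisfies ∂ₜQ + u∂ₓQ = -ρ⁻¹∂ₓ(ρ^α∂ₓu) and (ρ, ρV) solves
∂ₜρ + ∂ₓ(ρu) = 0 and ∂ₜ(ρV) + ∂ₓ(ρuV) + ∂ₓρ^γ = ρ∂ₓ((∂ₓₓ√ρ)/√ρ). -/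
theorem stmt_12 (ρ u : ℝ → ℝ → ℝ) (γ α : ℝ) (hγ : 1 < γ)
    (hρ : ContDiff ℝ (⊤ : ℕ∞) (Function.uncurry ρ)) (hu : ContDiff ℝ (⊤ : ℕ∞) (Function.uncurry u))
    (hpos : ∀ t x, 0 < ρ t x)
    (hper : ∀ t x, ρ t (x + 1) = ρ t x ∧ u t (x + 1) = u t x)
    (hcont : ∀ t x, deriv (fun s => ρ s x) t + deriv (fun y => ρ t y * u t y) x = 0)
    (hmom : ∀ t x,
      deriv (fun s => ρ s x * u s x) t
          + deriv (fun y => ρ t y * (u t y) ^ 2 + ρ t y ^ γ) x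
        = deriv (fun y => ρ t y ^ α * deriv (u t) y) x
          + ρ t x *
            deriv (fun y => deriv (deriv (fun z => Real.sqrt (ρ t z))) y / Real.sqrt (ρ t y)) x) :
    (∀ t x,
        deriv (fun s => ρ s x ^ (α - 2) * deriv (ρ s) x) t
            + u t x * deriv (fun y => ρ t y ^ (α - 2) * deriv (ρ t) y) x
          = -(ρ t x)⁻¹ * deriv (fun y => ρ t y ^ α * deriv (u t) y) x)
    ∧ (∀ t x, deriv (fun s => ρ s x) t + deriv (fun y => ρ t y * u t y) x = 0)
    ∧ (∀ t x,
        deriv (fun s => ρ s x * (u s x + ρ s x ^ (α - 2) * deriv (ρ s) x)) t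
            + deriv (fun y => ρ t y * u t y * (u t y + ρ t y ^ (α - 2) * deriv (ρ t) y)) x
            + deriv (fun y => ρ t y ^ γ) x
          = ρ t x *
              deriv (fun y => deriv (deriv (fun z => Real.sqrt (ρ t z))) y / Real.sqrt (ρ t y)) x) := by
  have Hρx : ∀ t x, HasDerivAt (ρ t) (deriv (ρ t) x) x := fun t x => hdA_snd hρ t x
  have Hρt : ∀ t x, HasDerivAt (fun s => ρ s x) (deriv (fun s => ρ s x) t) t :=
    fun t x => hdA_fst hρ t x
  have Hux : ∀ t x, HasDerivAt (u t) (deriv (u t) x) x := fun t x => hdA_snd hu t x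
  have Hut : ∀ t x, HasDerivAt (fun s => u s x) (deriv (fun s => u s x) t) t :=
    fun t x => hdA_fst hu t x
  have Hρxx : ∀ t x, HasDerivAt (fun y => deriv (ρ t) y) (deriv (fun y => deriv (ρ t) y) x) x :=
    fun t x => hdA_snd (contDiff_dSnd hρ) t x
  have Huxx : ∀ t x, HasDerivAt (fun y => deriv (u t) y) (deriv (fun y => deriv (u t) y) x) x :=
    fun t x => hdA_snd (contDiff_dSnd hu) t x
  have Hρxt : ∀ t x, HasDerivAt (fun s => deriv (ρ s) x) (deriv (fun s => deriv (ρ s) x) t) t :=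
    fun t x => hdA_fst (contDiff_dSnd hρ) t x
  have Hρtx : ∀ t x, HasDerivAt (fun y => deriv (fun s => ρ s y) t)
      (deriv (fun y => deriv (fun s => ρ s y) t) x) x :=
    fun t x => hdA_snd (contDiff_dFst hρ) t x
  have hswap : ∀ t x, deriv (fun s => deriv (ρ s) x) t
      = deriv (fun y => deriv (fun s => ρ s y) t) x := fun t x => deriv_swap hρ t x
  -- expanded continuity equation
  have E1 : ∀ t x, deriv (fun s => ρ s x) t
      + (deriv (ρ t) x * u t x + ρ t x * deriv (u t) x) = 0 := by
    intro t x
    have hC1 : deriv (fun y => ρ t y * u t y) x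
        = deriv (ρ t) x * u t x + ρ t x * deriv (u t) x := ((Hρx t x).mul (Hux t x)).deriv
    have h := hcont t x
    rw [hC1] at h
    exact h
  -- x-derivative of the continuity equation
  have E2 : ∀ t x, deriv (fun s => deriv (ρ s) x) t
      + (deriv (fun y => deriv (ρ t) y) x * u t x + ρ t x * deriv (fun y => deriv (u t) y) x
        + 2 * (deriv (ρ t) x * deriv (u t) x)) = 0 := by
    intro t x
    have hfun : (fun y => deriv (fun s => ρ s y) t
        + (deriv (ρ t) y * u t y + ρ t y * deriv (u t) y)) = fun _ => (0 : ℝ) :=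
      funext fun y => E1 t y
    have hD : HasDerivAt (fun y => deriv (fun s => ρ s y) t
          + (deriv (ρ t) y * u t y + ρ t y * deriv (u t) y))
        (deriv (fun y => deriv (fun s => ρ s y) t) x
          + ((deriv (fun y => deriv (ρ t) y) x * u t x + deriv (ρ t) x * deriv (u t) x)
            + (deriv (ρ t) x * deriv (u t) x
              + ρ t x * deriv (fun y => deriv (u t) y) x))) x := by
      exact (Hρtx t x).add (((Hρxx t x).mul (Hux t x)).add ((Hρx t x).mul (Huxx t x)))
    have h0 : deriv (fun y => deriv (fun s => ρ s y) t
        + (deriv (ρ t) y * u t y + ρ t y * deriv (u t) y)) x = 0 := by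
      rw [hfun]; exact deriv_const x 0
    have hbig := hD.deriv
    rw [h0, ← hswap t x] at hbig
    linarith
  refine ⟨?_, hcont, ?_⟩
  · intro t x
    have hne : ρ t x ≠ 0 := (hpos t x).ne'
    have d1 : deriv (fun s => ρ s x ^ (α - 2) * deriv (ρ s) x) t
        = deriv (fun s => ρ s x) t * (α - 2) * ρ t x ^ (α - 2 - 1) * deriv (ρ t) x
          + ρ t x ^ (α - 2) * deriv (fun s => deriv (ρ s) x) t :=
      (((Hρt t x).rpow_const (Or.inl hne)).mul (Hρxt t x)).deriv
    have d2 : deriv (fun y => ρ t y ^ (α - 2) * deriv (ρ t) y) x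
        = deriv (ρ t) x * (α - 2) * ρ t x ^ (α - 2 - 1) * deriv (ρ t) x
          + ρ t x ^ (α - 2) * deriv (fun y => deriv (ρ t) y) x :=
      (((Hρx t x).rpow_const (Or.inl hne)).mul (Hρxx t x)).deriv
    have d3 : deriv (fun y => ρ t y ^ α * deriv (u t) y) x
        = deriv (ρ t) x * α * ρ t x ^ (α - 1) * deriv (u t) x
          + ρ t x ^ α * deriv (fun y => deriv (u t) y) x :=
      (((Hρx t x).rpow_const (Or.inl hne)).mul (Huxx t x)).deriv
    rw [d1, d2, d3]
    have hrt : deriv (fun s => ρ s x) t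
        = -(deriv (ρ t) x * u t x + ρ t x * deriv (u t) x) := by linarith [E1 t x]
    have hrtx : deriv (fun s => deriv (ρ s) x) t
        = -(deriv (fun y => deriv (ρ t) y) x * u t x
            + ρ t x * deriv (fun y => deriv (u t) y) x
            + 2 * (deriv (ρ t) x * deriv (u t) x)) := by linarith [E2 t x]
    rw [hrt, hrtx, show α - 2 - 1 = α - 1 - 1 - 1 from by ring,
      show α - 2 = α - 1 - 1 from by ring]
    simp only [Real.rpow_sub_one hne]
    field_simp
    ring
  · intro t x
    have hne : ρ t x ≠ 0 := (hpos t x).ne'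
    have d1 : deriv (fun s => ρ s x * (u s x + ρ s x ^ (α - 2) * deriv (ρ s) x)) t
        = deriv (fun s => ρ s x) t * (u t x + ρ t x ^ (α - 2) * deriv (ρ t) x)
          + ρ t x * (deriv (fun s => u s x) t
            + (deriv (fun s => ρ s x) t * (α - 2) * ρ t x ^ (α - 2 - 1) * deriv (ρ t) x
              + ρ t x ^ (α - 2) * deriv (fun s => deriv (ρ s) x) t)) :=
      ((Hρt t x).mul ((Hut t x).add
        (((Hρt t x).rpow_const (Or.inl hne)).mul (Hρxt t x)))).deriv
    have d2 : deriv (fun y => ρ t y * u t y * (u t y + ρ t y ^ (α - 2) * deriv (ρ t) y)) x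
        = (deriv (ρ t) x * u t x + ρ t x * deriv (u t) x)
            * (u t x + ρ t x ^ (α - 2) * deriv (ρ t) x)
          + ρ t x * u t x * (deriv (u t) x
            + (deriv (ρ t) x * (α - 2) * ρ t x ^ (α - 2 - 1) * deriv (ρ t) x
              + ρ t x ^ (α - 2) * deriv (fun y => deriv (ρ t) y) x)) :=
      (((Hρx t x).mul (Hux t x)).mul ((Hux t x).add
        (((Hρx t x).rpow_const (Or.inl hne)).mul (Hρxx t x)))).deriv
    have d3 : deriv (fun y => ρ t y ^ γ) x = deriv (ρ t) x * γ * ρ t x ^ (γ - 1) :=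
      ((Hρx t x).rpow_const (Or.inl hne)).deriv
    have dvisc : deriv (fun y => ρ t y ^ α * deriv (u t) y) x
        = deriv (ρ t) x * α * ρ t x ^ (α - 1) * deriv (u t) x
          + ρ t x ^ α * deriv (fun y => deriv (u t) y) x :=
      (((Hρx t x).rpow_const (Or.inl hne)).mul (Huxx t x)).deriv
    have dm1 : deriv (fun s => ρ s x * u s x) t
        = deriv (fun s => ρ s x) t * u t x + ρ t x * deriv (fun s => u s x) t :=
      ((Hρt t x).mul (Hut t x)).deriv
    have hu2 : HasDerivAt (fun y => u t y ^ 2) (2 * u t x * deriv (u t) x) x := by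
      have h := (Hux t x).pow 2
      norm_num at h
      exact h
    have dm2 : deriv (fun y => ρ t y * u t y ^ 2 + ρ t y ^ γ) x
        = deriv (ρ t) x * u t x ^ 2 + ρ t x * (2 * u t x * deriv (u t) x)
          + deriv (ρ t) x * γ * ρ t x ^ (γ - 1) :=
      (((Hρx t x).mul hu2).add ((Hρx t x).rpow_const (Or.inl hne))).deriv
    have hm := hmom t x
    rw [dm1, dm2, dvisc] at hm
    have hS : ρ t x * deriv (fun y => deriv (deriv (fun z => Real.sqrt (ρ t z))) y
          / Real.sqrt (ρ t y)) x
        = deriv (fun s => ρ s x) t * u t x + ρ t x * deriv (fun s => u s x) t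
          + (deriv (ρ t) x * u t x ^ 2 + ρ t x * (2 * u t x * deriv (u t) x)
            + deriv (ρ t) x * γ * ρ t x ^ (γ - 1))
          - (deriv (ρ t) x * α * ρ t x ^ (α - 1) * deriv (u t) x
            + ρ t x ^ α * deriv (fun y => deriv (u t) y) x) := by linarith
    rw [d1, d2, d3, hS]
    have hrt : deriv (fun s => ρ s x) t
        = -(deriv (ρ t) x * u t x + ρ t x * deriv (u t) x) := by linarith [E1 t x]
    have hrtx : deriv (fun s => deriv (ρ s) x) t
        = -(deriv (fun y => deriv (ρ t) y) x * u t x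
            + ρ t x * deriv (fun y => deriv (u t) y) x
            + 2 * (deriv (ρ t) x * deriv (u t) x)) := by linarith [E2 t x]
    rw [hrt, hrtx, show α - 2 - 1 = α - 1 - 1 - 1 from by ring,
      show α - 2 = α - 1 - 1 from by ring]
    simp only [Real.rpow_sub_one hne]
    field_simp
    ring
end
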